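/- For every integer $n\ge 1$, every $p\in(0,1)$ with $q=1-p$, the win probability of the fixed threshold rule given $n$ arrivals before the threshold, $V_n := \sum_{y\ge 1} \binom{n+y-1}{y} q^{y} p^{n}\,\frac{n}{n+y}\sum_{j=1}^{y}\frac{1}{n+j-1}$, defines a convergent series, and in the case $n=1$ it equals $\frac{p}{2q}(\log(1-q))^2$ while $\tilde\pi_1 := \sum_{k\ge 0}\frac{q^{k}p}{1+k} = -\frac{p}{q}\log(1-q)$ satisfies $\tilde\pi_1 - V_1 = \frac{p}{2q}\bigl[-2\log(1-q) - (\log(1-q))^{2}\bigr]$, which is strictly positive for all $q \in (0, 1-e^{-2})$. -/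

import Mathlib

/-!
For `n = 1` the series is, after the shift `y = m + 1`, `p / (2q)` times the Cauchy square of
`-log (1 - q) = ∑ q^(k+1) / (k+1)`: partial fractions turn the Cauchy coefficient
`∑_{i+j=m} 1/((i+1)(j+1))` into `2 H_{m+1} / (m+2)`, which is exactly the `y`-th summand of `V_1`.
For general `n`, `p^n ≤ 1` and `(n/(n+y)) ∑_{j ≤ y} 1/(n+j-1) ≤ (n/(n+y)) (y/n) ≤ 1`, so `V_n` is
dominated by the negative binomial series `∑ C(n+y-1, y) q^y`.
The rest is arithmetic with `-2 < log (1 - q) < 0` for `q < 1 - e⁻²`.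
-/

open Finset Real

/-- The `y`-th summand of the win probability `V_n`. -/
noncomputable def winTerm (n : ℕ) (p q : ℝ) (y : ℕ) : ℝ :=
  ((n + y - 1).choose y : ℝ) * q ^ y * p ^ n * ((n : ℝ) / ((n : ℝ) + (y : ℝ))) *
    ∑ j ∈ Icc 1 y, (1 : ℝ) / ((n : ℝ) + (j : ℝ) - 1)

lemma sum_Icc_one_eq_sum_range {M : Type*} [AddCommMonoid M] (f : ℕ → M) (y : ℕ) :
    ∑ j ∈ Icc 1 y, f j = ∑ i ∈ range y, f (i + 1) := by
  rw [range_eq_Ico, sum_Ico_add' f 0 y 1]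
  rfl

section Summability

variable {n : ℕ} {p q : ℝ}

lemma sum_Icc_inv_le_div (hn : 1 ≤ n) (y : ℕ) :
    ∑ j ∈ Icc 1 y, (1 : ℝ) / ((n : ℝ) + (j : ℝ) - 1) ≤ y / n := by
  have hn' : (1 : ℝ) ≤ n := by exact_mod_cast hn
  calc ∑ j ∈ Icc 1 y, (1 : ℝ) / ((n : ℝ) + (j : ℝ) - 1)
      ≤ ∑ _j ∈ Icc 1 y, (1 : ℝ) / n := by
        refine sum_le_sum fun j hj => ?_
        have hj : (1 : ℝ) ≤ j := by exact_mod_cast (mem_Icc.mp hj).1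
        gcongr
        linarith
    _ = y / n := by simp [div_eq_mul_inv]

lemma sum_Icc_inv_nonneg (n y : ℕ) : 0 ≤ ∑ j ∈ Icc 1 y, (1 : ℝ) / ((n : ℝ) + (j : ℝ) - 1) := by
  refine sum_nonneg fun j hj => div_nonneg zero_le_one ?_
  have hj : (1 : ℝ) ≤ j := by exact_mod_cast (mem_Icc.mp hj).1
  linarith [n.cast_nonneg (α := ℝ)]

lemma winTerm_nonneg (hp : 0 ≤ p) (hq : 0 ≤ q) (y : ℕ) : 0 ≤ winTerm n p q y :=
  mul_nonneg (by positivity) (sum_Icc_inv_nonneg n y)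

lemma winTerm_le (hn : 1 ≤ n) (hp0 : 0 ≤ p) (hp1 : p ≤ 1) (hq : 0 ≤ q) (y : ℕ) :
    winTerm n p q y ≤ ((n + y - 1).choose y : ℝ) * q ^ y := by
  have hn' : (0 : ℝ) < n := by exact_mod_cast hn
  set S := ∑ j ∈ Icc 1 y, (1 : ℝ) / ((n : ℝ) + (j : ℝ) - 1)
  have hweight : (n : ℝ) / (n + y) * S ≤ 1 :=
    calc (n : ℝ) / (n + y) * S ≤ n / (n + y) * (y / n) := by
          gcongr; exact sum_Icc_inv_le_div hn y
      _ ≤ 1 := by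
        rw [div_mul_div_comm, mul_comm, div_le_one (by positivity)]
        nlinarith [y.cast_nonneg (α := ℝ)]
  have hS : 0 ≤ S := sum_Icc_inv_nonneg n y
  calc winTerm n p q y
      = ((n + y - 1).choose y : ℝ) * q ^ y * (p ^ n * ((n : ℝ) / (n + y) * S)) := by
        unfold winTerm; ring
    _ ≤ ((n + y - 1).choose y : ℝ) * q ^ y :=
        mul_le_of_le_one_right (by positivity) <|
          mul_le_one₀ (pow_le_one₀ hp0 hp1) (by positivity) hweight

lemma summable_winTerm (hn : 1 ≤ n) (hp0 : 0 ≤ p) (hp1 : p ≤ 1) (hq0 : 0 ≤ q) (hq1 : q < 1) :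
    Summable (winTerm n p q) := by
  have hbinom : Summable fun y : ℕ => ((n + y - 1).choose y : ℝ) * q ^ y := by
    have := summable_choose_mul_geometric_of_norm_lt_one (n - 1)
      (by rwa [norm_of_nonneg hq0] : ‖q‖ < 1)
    refine this.congr fun y => ?_
    rw [show n + y - 1 = y + (n - 1) by omega, Nat.choose_symm_add]
  exact hbinom.of_nonneg_of_le (winTerm_nonneg hp0 hq0) (winTerm_le hn hp0 hp1 hq0)

end Summability

section LogSeries

variable {q : ℝ}

/-- Partial fractions: `1/((i+1)(j+1)) = (1/(i+1) + 1/(j+1))/(m+2)` when `i + j = m`. -/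
lemma sum_antidiagonal_inv_mul_inv (m : ℕ) :
    ∑ ij ∈ antidiagonal m, ((ij.1 : ℝ) + 1)⁻¹ * ((ij.2 : ℝ) + 1)⁻¹
      = 2 / ((m : ℝ) + 2) * ∑ i ∈ range (m + 1), ((i : ℝ) + 1)⁻¹ := by
  have hsplit : ∀ ij ∈ antidiagonal m, ((ij.1 : ℝ) + 1)⁻¹ * ((ij.2 : ℝ) + 1)⁻¹
      = ((m : ℝ) + 2)⁻¹ * (((ij.1 : ℝ) + 1)⁻¹ + ((ij.2 : ℝ) + 1)⁻¹) := by
    intro ij hij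
    have hm : (ij.1 : ℝ) + ij.2 = m := by exact_mod_cast mem_antidiagonal.mp hij
    field_simp
    linarith
  have hswap : ∑ ij ∈ antidiagonal m, ((ij.2 : ℝ) + 1)⁻¹
      = ∑ ij ∈ antidiagonal m, ((ij.1 : ℝ) + 1)⁻¹ :=
    Nat.sum_antidiagonal_swap (f := fun ij => ((ij.1 : ℝ) + 1)⁻¹)
  rw [sum_congr rfl hsplit, ← mul_sum, sum_add_distrib, hswap,
    Nat.sum_antidiagonal_eq_sum_range_succ (fun i _ => ((i : ℝ) + 1)⁻¹)]
  ring

lemma hasSum_log_one_sub_sq (hq : |q| < 1) :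
    HasSum (fun m : ℕ => q ^ (m + 2) * (2 / ((m : ℝ) + 2) * ∑ i ∈ range (m + 1), ((i : ℝ) + 1)⁻¹))
      (log (1 - q) ^ 2) := by
  set f : ℕ → ℝ := fun k => q ^ (k + 1) / (k + 1)
  have hf : HasSum f (-log (1 - q)) := hasSum_pow_div_log_of_abs_lt_one hq
  have hf_norm : Summable fun k => ‖f k‖ := summable_norm_iff.mpr hf.summable
  have hcauchy := hasSum_sum_range_mul_of_summable_norm hf_norm hf_norm
  simp_rw [← Nat.sum_antidiagonal_eq_sum_range_succ fun k l => f k * f l, hf.tsum_eq,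
    neg_mul_neg, ← sq] at hcauchy
  refine hcauchy.congr_fun fun m => ?_
  rw [← sum_antidiagonal_inv_mul_inv, mul_sum]
  refine sum_congr rfl fun ij hij => ?_
  rw [← mem_antidiagonal.mp hij]
  simp only [f]
  ring

lemma hasSum_winTerm_one (hq0 : q ≠ 0) (hq : |q| < 1) (p : ℝ) :
    HasSum (winTerm 1 p q) (p / (2 * q) * log (1 - q) ^ 2) := by
  have hzero : winTerm 1 p q 0 = 0 := by simp [winTerm]
  rw [← hasSum_nat_add_iff' 1, sum_range_one, hzero, sub_zero]
  refine ((hasSum_log_one_sub_sq hq).mul_left (p / (2 * q))).congr_fun fun m => ?_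
  simp only [winTerm, Nat.add_sub_cancel_left, Nat.choose_self, sum_Icc_one_eq_sum_range]
  push_cast
  simp only [add_sub_cancel_left, one_div]
  field_simp
  ring

lemma hasSum_pow_mul_div_one_add (hq0 : q ≠ 0) (hq : |q| < 1) (p : ℝ) :
    HasSum (fun k : ℕ => q ^ k * p / (1 + (k : ℝ))) (-(p / q) * log (1 - q)) := by
  have h := (hasSum_pow_div_log_of_abs_lt_one hq).mul_left (p / q)
  rw [mul_neg, ← neg_mul] at h
  refine h.congr_fun fun k => ?_
  field_simp
  ring

lemma neg_two_mul_log_one_sub_sub_sq_pos (hq0 : 0 < q) (hq : q < 1 - exp (-2)) :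
    0 < -2 * log (1 - q) - log (1 - q) ^ 2 := by
  have hexp : exp (-2) < 1 - q := by linarith
  have hneg : log (1 - q) < 0 := log_neg (exp_pos _ |>.trans hexp) (by linarith)
  have hgt : -2 < log (1 - q) := by simpa using log_lt_log (exp_pos _) hexp
  nlinarith

end LogSeries

/-- For `n ≥ 1`, `p ∈ (0,1)`, `q = 1-p`: the series
`V_n = ∑_{y≥1} C(n+y-1,y) q^y p^n (n/(n+y)) ∑_{j=1}^y 1/(n+j-1)` converges; for `n = 1`
it equals `(p/2q)(log(1-q))²`, while `π̃₁ = ∑_{k≥0} q^k p/(1+k) = -(p/q) log(1-q)` and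
`π̃₁ - V₁ = (p/2q)[-2 log(1-q) - (log(1-q))²]`, which is strictly positive for all
`q ∈ (0, 1-e⁻²)`. -/
theorem stmt_13 (n : ℕ) (hn : 1 ≤ n) (p : ℝ) (hp : p ∈ Set.Ioo (0 : ℝ) 1)
    (q : ℝ) (hq : q = 1 - p) :
    Summable (fun y : ℕ => ((n + y - 1).choose y : ℝ) * q ^ y * p ^ n *
        ((n : ℝ) / ((n : ℝ) + (y : ℝ))) *
        ∑ j ∈ Finset.Icc 1 y, (1 : ℝ) / ((n : ℝ) + (j : ℝ) - 1)) ∧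
    (n = 1 →
      (∑' y : ℕ, ((n + y - 1).choose y : ℝ) * q ^ y * p ^ n *
          ((n : ℝ) / ((n : ℝ) + (y : ℝ))) *
          ∑ j ∈ Finset.Icc 1 y, (1 : ℝ) / ((n : ℝ) + (j : ℝ) - 1))
        = p / (2 * q) * Real.log (1 - q) ^ 2) ∧
    (∑' k : ℕ, q ^ k * p / (1 + (k : ℝ))) = -(p / q) * Real.log (1 - q) ∧
    (∑' k : ℕ, q ^ k * p / (1 + (k : ℝ))) -
        (∑' y : ℕ, ((1 + y - 1).choose y : ℝ) * q ^ y * p ^ 1 *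
          ((1 : ℝ) / (1 + (y : ℝ))) *
          ∑ j ∈ Finset.Icc 1 y, (1 : ℝ) / ((1 : ℝ) + (j : ℝ) - 1))
      = p / (2 * q) * (-2 * Real.log (1 - q) - Real.log (1 - q) ^ 2) ∧
    (q < 1 - Real.exp (-2) →
      0 < p / (2 * q) * (-2 * Real.log (1 - q) - Real.log (1 - q) ^ 2)) := by
  obtain ⟨hp0, hp1⟩ := hp
  have hq0 : 0 < q := by linarith
  have hq1 : |q| < 1 := abs_lt.mpr ⟨by linarith, by linarith⟩
  have hV := hasSum_winTerm_one hq0.ne' hq1 p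
  have hπ := hasSum_pow_mul_div_one_add hq0.ne' hq1 p
  refine ⟨summable_winTerm hn hp0.le hp1.le hq0.le (by linarith), ?_, hπ.tsum_eq, ?_, ?_⟩
  · rintro rfl
    exact hV.tsum_eq
  · unfold winTerm at hV
    simp only [Nat.cast_one] at hV
    rw [hπ.tsum_eq, hV.tsum_eq]
    field_simp
  · exact fun hlt => mul_pos (by positivity) (neg_two_mul_log_one_sub_sub_sq_pos hq0 hlt)
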